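/- Let n ≥ 2, let A be a matrix on the boundary of the copositive cone C_n with at least k ≥ 2 strictly positive diagonal entries, and let M be completely positive with ⟨M, A⟩ = 0. Then cp-rank(M) ≤ C(n+1, 2) − k, i.e., at most n(n+1)/2 − k. -/

import Mathlib

open Matrix BigOperators

def Copositive {ι : Type} [Fintype ι] (A : Matrix ι ι ℝ) : Prop :=
  A.IsSymm ∧ ∀ x : ι → ℝ, (∀ i, 0 ≤ x i) → 0 ≤ x ⬝ᵥ A.mulVec x

def CompletelyPositive {ι : Type} [Fintype ι] (M : Matrix ι ι ℝ) : Prop :=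
  ∃ (p : ℕ) (v : Fin p → ι → ℝ), (∀ j i, 0 ≤ v j i) ∧
    M = ∑ j, Matrix.vecMulVec (v j) (v j)

noncomputable def cpRank {ι : Type} [Fintype ι] (M : Matrix ι ι ℝ) : ℕ :=
  sInf {p : ℕ | ∃ v : Fin p → ι → ℝ, (∀ j i, 0 ≤ v j i) ∧
    M = ∑ j, Matrix.vecMulVec (v j) (v j)}

noncomputable def pmax (n : ℕ) : ℕ :=
  sSup {k : ℕ | ∃ M : Matrix (Fin n) (Fin n) ℝ, CompletelyPositive M ∧ cpRank M = k}

def ExtremeCopositive {ι : Type} [Fintype ι] (A : Matrix ι ι ℝ) : Prop :=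
  Copositive A ∧ A ≠ 0 ∧ ∀ B C : Matrix ι ι ℝ, Copositive B → Copositive C → A = B + C →
    ∃ s t : ℝ, 0 ≤ s ∧ 0 ≤ t ∧ B = s • A ∧ C = t • A

def E12 (k : ℕ) : Matrix (Fin k) (Fin k) ℝ :=
  Matrix.of fun i j => if (i.val = 0 ∧ j.val = 1) ∨ (i.val = 1 ∧ j.val = 0) then 1 else 0

def InOrbitOfE12 {k : ℕ} (S : Matrix (Fin k) (Fin k) ℝ) : Prop :=
  ∃ (d : Fin k → ℝ) (σ : Equiv.Perm (Fin k)), (∀ i, 0 < d i) ∧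
    S = Matrix.diagonal d * (σ.permMatrix ℝ)ᵀ * E12 k * σ.permMatrix ℝ * Matrix.diagonal d

/-! Since `C_n` is closed, `A` is copositive. If `M = ∑ⱼ vⱼ vⱼᵀ` with `vⱼ ≥ 0`, then `⟨M, A⟩ = 0`
forces every `vⱼᵀ A vⱼ` to vanish, so `vⱼ` minimises the quadratic form of `A` on the nonnegative orthant and
`(vⱼ)ᵢ (A vⱼ)ᵢ = 0` for every `i`. Hence all the rank-one matrices `vⱼ vⱼᵀ` lie in the space `L` of
symmetric `B` with `(B A)ᵢᵢ = 0` whenever `Aᵢᵢ > 0`. Each such equation lets one solve for `Bᵢᵢ`,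
so `dim L ≤ C(n+1, 2) - k`, and Carathéodory's theorem for the cone spanned by the `vⱼ vⱼᵀ` in `L`
rewrites `M` as a nonnegative combination of at most `dim L` of them. -/

lemma Sym2.mk_mem_image_diag_iff {ι : Type*} [DecidableEq ι] {S : Finset ι} {a b : ι} :
    s(a, b) ∈ S.image Sym2.diag ↔ a = b ∧ a ∈ S := by
  constructor
  · intro h
    obtain ⟨i, hi, hab⟩ := Finset.mem_image.1 h
    obtain rfl : a = b := Sym2.mk_isDiag_iff.1 (hab ▸ Sym2.diag_isDiag i)
    exact ⟨rfl, Sym2.diag_injective hab ▸ hi⟩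
  · rintro ⟨rfl, ha⟩
    exact Finset.mem_image_of_mem _ ha

section ConicCaratheodory

variable {𝕜 E κ : Type*} [Field 𝕜] [LinearOrder 𝕜] [IsStrictOrderedRing 𝕜]
  [AddCommGroup E] [Module 𝕜 E] [DecidableEq κ]

lemma exists_nonneg_sum_smul_erase_eq {w : κ → E} {s : Finset κ} {c g : κ → 𝕜}
    (hc : ∀ j ∈ s, 0 ≤ c j) (hg : ∑ j ∈ s, g j • w j = 0) (hpos : ∃ j ∈ s, 0 < g j) :
    ∃ j₀ ∈ s, ∃ c' : κ → 𝕜, (∀ j ∈ s.erase j₀, 0 ≤ c' j) ∧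
      ∑ j ∈ s.erase j₀, c' j • w j = ∑ j ∈ s, c j • w j := by
  set P := s.filter fun j => 0 < g j
  have hP : P.Nonempty := by simpa [P, Finset.filter_nonempty_iff] using hpos
  -- `c' = c - r g` with the largest `r` keeping `c'` nonnegative; it vanishes at a minimiser `j₀`.
  obtain ⟨j₀, hj₀P, hr⟩ := Finset.exists_mem_eq_inf' hP fun j => c j / g j
  set r := P.inf' hP fun j => c j / g j
  obtain ⟨hj₀, hgj₀⟩ := Finset.mem_filter.1 hj₀P
  have hr0 : 0 ≤ r := Finset.le_inf' _ _ fun j hj =>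
    div_nonneg (hc j (Finset.mem_filter.1 hj).1) (Finset.mem_filter.1 hj).2.le
  refine ⟨j₀, hj₀, fun j => c j - r * g j, fun j hj => ?_, ?_⟩
  · have hj := Finset.mem_of_mem_erase hj
    by_cases hgj : 0 < g j
    · have : r ≤ c j / g j := Finset.inf'_le _ (Finset.mem_filter.2 ⟨hj, hgj⟩)
      linarith [(le_div_iff₀ hgj).1 this]
    · linarith [hc j hj, mul_nonpos_of_nonneg_of_nonpos hr0 (not_lt.1 hgj)]
  · have hzero : c j₀ - r * g j₀ = 0 := by rw [hr, div_mul_cancel₀ _ hgj₀.ne', sub_self]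
    rw [Finset.sum_erase s (show (c j₀ - r * g j₀) • w j₀ = 0 by rw [hzero, zero_smul])]
    simp only [sub_smul, Finset.sum_sub_distrib, mul_smul, ← Finset.smul_sum, hg, smul_zero,
      sub_zero]

lemma exists_nonneg_sum_smul_card_le_finrank (W : Submodule 𝕜 E) [FiniteDimensional 𝕜 W]
    (w : κ → E) (s : Finset κ) (hw : ∀ j ∈ s, w j ∈ W) (c : κ → 𝕜) (hc : ∀ j ∈ s, 0 ≤ c j) :
    ∃ t ⊆ s, t.card ≤ Module.finrank 𝕜 W ∧ ∃ c' : κ → 𝕜, (∀ j ∈ t, 0 ≤ c' j) ∧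
      ∑ j ∈ t, c' j • w j = ∑ j ∈ s, c j • w j := by
  induction s using Finset.strongInduction generalizing c with
  | _ s ih =>
  by_cases hcard : s.card ≤ Module.finrank 𝕜 W
  · exact ⟨s, subset_rfl, hcard, c, hc, rfl⟩
  have hdep : ¬LinearIndepOn 𝕜 w s := fun hind => hcard <| by
    have := finrank_span_eq_card hind
    simp only [Finset.coe_sort_coe, Fintype.card_coe] at this
    rw [← this]
    exact Submodule.finrank_mono (Submodule.span_le.2 (by rintro _ ⟨j, rfl⟩; exact hw j j.2))
  obtain ⟨g, hg, i, hi, hgi⟩ := not_linearIndepOn_finset_iff.1 hdep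
  obtain ⟨g, hg, hpos⟩ : ∃ g : κ → 𝕜, ∑ j ∈ s, g j • w j = 0 ∧ ∃ j ∈ s, 0 < g j := by
    rcases hgi.lt_or_gt with hneg | hpos
    · exact ⟨-g, by simp [hg], i, hi, by simpa using hneg⟩
    · exact ⟨g, hg, i, hi, hpos⟩
  obtain ⟨j₀, hj₀, c', hc', hsum⟩ := exists_nonneg_sum_smul_erase_eq hc hg hpos
  obtain ⟨t, hts, ht, c'', hc'', hsum'⟩ := ih _ (Finset.erase_ssubset hj₀)
    (fun j hj => hw j (Finset.mem_of_mem_erase hj)) c' hc'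
  exact ⟨t, hts.trans (Finset.erase_subset _ _), ht, c'', hc'', hsum'.trans hsum⟩

end ConicCaratheodory

section SymmetricMulDiagKer

variable {𝕜 ι : Type*} [Field 𝕜] [Fintype ι]

def symmetricMulDiagKer (A : Matrix ι ι 𝕜) (S : Finset ι) : Submodule 𝕜 (Matrix ι ι 𝕜) where
  carrier := {B | B.IsSymm ∧ ∀ i ∈ S, (B * A) i i = 0}
  add_mem' := by
    rintro B C ⟨hB, hB'⟩ ⟨hC, hC'⟩
    exact ⟨hB.add hC, fun i hi => by simp [add_mul, hB' i hi, hC' i hi]⟩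
  zero_mem' := ⟨isSymm_zero, by simp⟩
  smul_mem' := by
    rintro c B ⟨hB, hB'⟩
    exact ⟨hB.smul c, fun i hi => by simp [hB' i hi]⟩

def symmetricMulDiagKer.toSym2 (A : Matrix ι ι 𝕜) (S : Finset ι) :
    symmetricMulDiagKer A S →ₗ[𝕜] Sym2 ι → 𝕜 where
  toFun B := Sym2.lift ⟨fun a b => (B : Matrix ι ι 𝕜) a b, fun a b => B.2.1.apply b a⟩
  map_add' B C := by
    ext s; induction s using Sym2.ind; rfl
  map_smul' c B := by
    ext s; induction s using Sym2.ind; rfl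

lemma finrank_symmetricMulDiagKer_le [DecidableEq ι] (A : Matrix ι ι 𝕜) (S : Finset ι)
    (hS : ∀ i ∈ S, A i i ≠ 0) :
    Module.finrank 𝕜 (symmetricMulDiagKer A S) ≤ (Fintype.card ι + 1).choose 2 - S.card := by
  set D := S.image Sym2.diag
  -- `(B A)ᵢᵢ = 0` determines `Bᵢᵢ` from the off-diagonal entries, so the entries at `D` are redundant.
  let φ : symmetricMulDiagKer A S →ₗ[𝕜] ↥(Dᶜ) → 𝕜 :=
    LinearMap.funLeft 𝕜 𝕜 Subtype.val ∘ₗ symmetricMulDiagKer.toSym2 A S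
  have hφ : Function.Injective φ := by
    rw [← LinearMap.ker_eq_bot, LinearMap.ker_eq_bot']
    rintro ⟨B, _, hBA⟩ hB
    have hoff : ∀ a b, ¬(a = b ∧ a ∈ S) → B a b = 0 := fun a b hab =>
      congrFun hB ⟨s(a, b), Finset.mem_compl.2 (Sym2.mk_mem_image_diag_iff.not.2 hab)⟩
    apply Subtype.ext
    ext a b
    by_cases hab : a = b ∧ a ∈ S
    · obtain ⟨rfl, ha⟩ := hab
      have := hBA a ha
      rw [mul_apply, Finset.sum_eq_single a (fun l _ hla => by
        rw [hoff a l (fun h => hla h.1.symm), zero_mul]) (by simp)] at this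
      exact (mul_eq_zero.1 this).resolve_right (hS a ha)
    · exact hoff a b hab
  calc Module.finrank 𝕜 (symmetricMulDiagKer A S)
      ≤ Module.finrank 𝕜 (↥(Dᶜ) → 𝕜) := LinearMap.finrank_le_finrank_of_injective hφ
    _ = (Fintype.card ι + 1).choose 2 - S.card := by
      rw [Module.finrank_fintype_fun_eq_card, Fintype.card_coe, Finset.card_compl, Sym2.card,
        Finset.card_image_of_injective _ Sym2.diag_injective]

end SymmetricMulDiagKer

lemma nonneg_of_forall_pos_nonneg_add_mul {a b : ℝ} (h : ∀ t : ℝ, 0 < t → 0 ≤ a + t * b) :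
    0 ≤ a := by
  refine ge_of_tendsto (f := fun t : ℝ => a + t * b) (x := nhdsWithin 0 (Set.Ioi 0)) ?_
    (eventually_nhdsWithin_of_forall h)
  have : Continuous fun t : ℝ => a + t * b := by fun_prop
  simpa using (this.tendsto 0).mono_left nhdsWithin_le_nhds

lemma Matrix.IsSymm.add_smul_single_dotProduct_mulVec {ι R : Type*} [Fintype ι] [DecidableEq ι]
    [CommRing R] {A : Matrix ι ι R} (hA : A.IsSymm) (v : ι → R) (i : ι) (t : R) :
    (v + t • Pi.single i 1) ⬝ᵥ A *ᵥ (v + t • Pi.single i 1) =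
      v ⬝ᵥ A *ᵥ v + t * (2 * (A *ᵥ v) i + t * A i i) := by
  have h1 : Pi.single i 1 ⬝ᵥ A *ᵥ v = (A *ᵥ v) i := by simp
  have h2 : v ⬝ᵥ A *ᵥ Pi.single i 1 = (A *ᵥ v) i := by
    rw [dotProduct_mulVec, ← mulVec_transpose, hA]; simp
  have h3 : Pi.single i 1 ⬝ᵥ A *ᵥ Pi.single i (1 : R) = A i i := by simp
  simp only [mulVec_add, mulVec_smul, add_dotProduct, dotProduct_add, smul_dotProduct,
    dotProduct_smul, smul_eq_mul, h1, h2, h3]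
  ring

lemma trace_transpose_vecMulVec_mul {ι R : Type*} [Fintype ι] [CommRing R] (A : Matrix ι ι R)
    (v : ι → R) : trace ((vecMulVec v v)ᵀ * A) = v ⬝ᵥ A *ᵥ v := by
  rw [transpose_vecMulVec, vecMulVec_mul, trace_vecMulVec, dotProduct_mulVec, dotProduct_comm]

section Copositive

variable {ι : Type} [Fintype ι]

lemma isClosed_setOf_copositive : IsClosed {A : Matrix ι ι ℝ | Copositive A} := by
  simp only [Copositive, Matrix.IsSymm, Set.ofPred_and, Set.ofPred_forall]
  exact (isClosed_eq (by fun_prop) continuous_id).inter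
    (isClosed_iInter fun x => isClosed_iInter fun _ => isClosed_le continuous_const (by fun_prop))

lemma copositive_of_mem_frontier {A : Matrix ι ι ℝ}
    (hA : A ∈ frontier {B : Matrix ι ι ℝ | Copositive B}) : Copositive A :=
  isClosed_setOf_copositive.frontier_subset hA

namespace Copositive

variable {A : Matrix ι ι ℝ} {v : ι → ℝ}

lemma mulVec_nonneg_of_dotProduct_mulVec_eq_zero (hA : Copositive A) (hv : ∀ i, 0 ≤ v i)
    (hq : v ⬝ᵥ A *ᵥ v = 0) (i : ι) :
    0 ≤ (A *ᵥ v) i := by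
  classical
  suffices h : ∀ t : ℝ, 0 < t → 0 ≤ 2 * (A *ᵥ v) i + t * A i i by
    linarith [nonneg_of_forall_pos_nonneg_add_mul h]
  intro t ht
  have hx : ∀ j, 0 ≤ (v + t • Pi.single i 1 : ι → ℝ) j := fun j => by
    have : 0 ≤ (Pi.single i 1 : ι → ℝ) j := by
      rcases eq_or_ne j i with rfl | hj <;> simp [*]
    simpa using add_nonneg (hv j) (mul_nonneg ht.le this)
  have := hA.2 _ hx
  rw [hA.1.add_smul_single_dotProduct_mulVec, hq, zero_add] at this
  exact nonneg_of_mul_nonneg_right (by linarith) ht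

lemma mul_mulVec_eq_zero (hA : Copositive A) (hv : ∀ i, 0 ≤ v i) (hq : v ⬝ᵥ A *ᵥ v = 0)
    (i : ι) : v i * (A *ᵥ v) i = 0 :=
  (Finset.sum_eq_zero_iff_of_nonneg fun j _ =>
    mul_nonneg (hv j) (hA.mulVec_nonneg_of_dotProduct_mulVec_eq_zero hv hq j)).1 hq i
    (Finset.mem_univ i)

lemma vecMulVec_mem_symmetricMulDiagKer (hA : Copositive A) (hv : ∀ i, 0 ≤ v i)
    (hq : v ⬝ᵥ A *ᵥ v = 0) (S : Finset ι) :
    vecMulVec v v ∈ symmetricMulDiagKer A S := by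
  refine ⟨transpose_vecMulVec v v, fun i _ => ?_⟩
  rw [vecMulVec_mul, vecMulVec_apply, ← mulVec_transpose, hA.1]
  exact hA.mul_mulVec_eq_zero hv hq i

end Copositive

lemma Copositive.dotProduct_mulVec_eq_zero_of_trace_eq_zero {A : Matrix ι ι ℝ}
    (hA : Copositive A) {p : ℕ} {v : Fin p → ι → ℝ} (hv : ∀ j i, 0 ≤ v j i)
    (h : trace ((∑ j, vecMulVec (v j) (v j))ᵀ * A) = 0) (j : Fin p) : v j ⬝ᵥ A *ᵥ v j = 0 := by
  simp only [transpose_sum, Finset.sum_mul, trace_sum, trace_transpose_vecMulVec_mul] at h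
  exact (Finset.sum_eq_zero_iff_of_nonneg fun j _ => hA.2 _ (hv j)).1 h j (Finset.mem_univ j)

lemma cpRank_sum_smul_vecMulVec_le_card {κ : Type*} (t : Finset κ) {c : κ → ℝ}
    {v : κ → ι → ℝ} (hc : ∀ j ∈ t, 0 ≤ c j) (hv : ∀ j i, 0 ≤ v j i) :
    cpRank (∑ j ∈ t, c j • vecMulVec (v j) (v j)) ≤ t.card := by
  let e := t.equivFin
  refine Nat.sInf_le ⟨fun m => √(c (e.symm m)) • v (e.symm m),
    fun m i => mul_nonneg (Real.sqrt_nonneg _) (hv _ i), ?_⟩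
  rw [← Finset.sum_coe_sort, ← e.symm.sum_comp]
  refine Finset.sum_congr rfl fun m _ => ?_
  ext a b
  simp only [Matrix.smul_apply, vecMulVec_apply, Pi.smul_apply, smul_eq_mul]
  rw [mul_mul_mul_comm, Real.mul_self_sqrt (hc _ (e.symm m).2)]

end Copositive

theorem stmt17_general {n : ℕ} (A M : Matrix (Fin n) (Fin n) ℝ)
    (hAbd : A ∈ frontier {B : Matrix (Fin n) (Fin n) ℝ | Copositive B})
    (k : ℕ)
    (hdiag : k ≤ (Finset.univ.filter fun i => 0 < A i i).card)
    (hM : CompletelyPositive M) (horth : Matrix.trace (Mᵀ * A) = 0) :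
    cpRank M ≤ (n + 1).choose 2 - k := by
  have hA : Copositive A := copositive_of_mem_frontier hAbd
  obtain ⟨p, v, hv, rfl⟩ := hM
  set S := Finset.univ.filter fun i => 0 < A i i
  have hS : ∀ i ∈ S, A i i ≠ 0 := fun i hi => (Finset.mem_filter.1 hi).2.ne'
  have hmem (j : Fin p) : vecMulVec (v j) (v j) ∈ symmetricMulDiagKer A S :=
    hA.vecMulVec_mem_symmetricMulDiagKer (hv j)
      (hA.dotProduct_mulVec_eq_zero_of_trace_eq_zero hv horth j) S
  obtain ⟨t, -, ht, c, hc, hsum⟩ := exists_nonneg_sum_smul_card_le_finrank _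
    (fun j => vecMulVec (v j) (v j)) Finset.univ (fun j _ => hmem j) 1 (fun _ _ => zero_le_one)
  calc cpRank (∑ j, vecMulVec (v j) (v j))
      = cpRank (∑ j ∈ t, c j • vecMulVec (v j) (v j)) := by simp [hsum]
    _ ≤ t.card := cpRank_sum_smul_vecMulVec_le_card t hc hv
    _ ≤ (Fintype.card (Fin n) + 1).choose 2 - S.card :=
      ht.trans (finrank_symmetricMulDiagKer_le A S hS)
    _ ≤ (n + 1).choose 2 - k := by rw [Fintype.card_fin]; omega

theorem stmt17 {n : ℕ} (hn : 2 ≤ n) (A M : Matrix (Fin n) (Fin n) ℝ)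
    (hAbd : A ∈ frontier {B : Matrix (Fin n) (Fin n) ℝ | Copositive B})
    (k : ℕ) (hk : 2 ≤ k)
    (hdiag : k ≤ (Finset.univ.filter fun i => 0 < A i i).card)
    (hM : CompletelyPositive M) (horth : Matrix.trace (Mᵀ * A) = 0) :
    cpRank M ≤ (n + 1).choose 2 - k :=
  stmt17_general A M hAbd k hdiag hM horth
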